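/- arXiv:1708.00423 — 10 statements merged into one kernel-verified Lean document; each statement's English description precedes it below -/
import Mathlib

section
/- Let G be a finite simple loopless digraph with vertex set V and let p : V → [0,1] be a function with p(V) > 0. Then there exists a stable (independent) set S ⊆ V such that p(N⁺[S]) ≥ p(V)/2, where N⁺[S] = S ∪ (⋃_{v∈S} N⁺(v)). -/
open Finset
open scoped Classical

private lemma half_cover_aux {V : Type*} [Fintype V] (E : V → V → Prop)
    (hsimple : ∀ u v, E u v → ¬ E v u)
    (p : V → ℝ) (hp0 : ∀ v, 0 ≤ p v) :
    ∀ A : Finset V, ∃ S : Finset V, S ⊆ A ∧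
      (∀ u ∈ S, ∀ w ∈ S, u ≠ w → ¬ E u w) ∧
      (∑ x ∈ A, p x) / 2 ≤ ∑ x ∈ S ∪ A.filter (fun x => ∃ u ∈ S, E u x), p x := by
  intro A
  induction A using Finset.strongInduction with
  | _ A ih =>
    by_cases hex : ∃ v ∈ A, 0 < p v ∧
        (∑ w ∈ A.filter (fun w => E w v), p w) ≤
          p v + ∑ w ∈ A.filter (fun w => E v w), p w
    · obtain ⟨v, hvA, hvpos, hkey⟩ := hex
      have hvv : ¬ E v v := fun h => hsimple v v h h
      set outF : Finset V := A.filter (fun w => E v w) with houtF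
      set inF : Finset V := A.filter (fun w => E w v) with hinF
      set Nv : Finset V := insert v (A.filter (fun w => E v w ∨ E w v)) with hNv
      have hNvA : Nv ⊆ A := by
        rw [hNv]
        exact insert_subset hvA (filter_subset _ _)
      have hA'ss : A \ Nv ⊂ A :=
        Finset.sdiff_ssubset hNvA ⟨v, mem_insert_self _ _⟩
      obtain ⟨S', hS'sub, hS'ind, hS'cov⟩ := ih (A \ Nv) hA'ss
      have hS'A' : ∀ x ∈ S', x ∈ A \ Nv := fun x hx => hS'sub hx
      refine ⟨insert v S', ?_, ?_, ?_⟩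
      · exact insert_subset hvA (hS'sub.trans (sdiff_subset))
      · -- independence
        intro u hu w hw huw
        rcases mem_insert.1 hu with rfl | hu'
        · rcases mem_insert.1 hw with rfl | hw'
          · exact absurd rfl huw
          · intro hEvw
            have := hS'A' w hw'
            rw [mem_sdiff] at this
            exact this.2 (mem_insert_of_mem (mem_filter.2 ⟨this.1, Or.inl hEvw⟩))
        · rcases mem_insert.1 hw with rfl | hw'
          · intro hEuw
            have := hS'A' u hu'
            rw [mem_sdiff] at this
            exact this.2 (mem_insert_of_mem (mem_filter.2 ⟨this.1, Or.inr hEuw⟩))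
          · exact hS'ind u hu' w hw' huw
      · -- coverage bound
        set C : Finset V :=
          insert v S' ∪ A.filter (fun x => ∃ u ∈ insert v S', E u x) with hC
        set C' : Finset V :=
          S' ∪ (A \ Nv).filter (fun x => ∃ u ∈ S', E u x) with hC'
        set Nplus : Finset V := insert v outF with hNplus
        have hC'A' : C' ⊆ A \ Nv := by
          rw [hC']
          exact union_subset hS'sub (filter_subset _ _)
        have hNplusNv : Nplus ⊆ Nv := by
          rw [hNplus, hNv]
          refine insert_subset (mem_insert_self _ _) ?_
          intro w hw
          rw [houtF, mem_filter] at hw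
          exact mem_insert_of_mem (mem_filter.2 ⟨hw.1, Or.inl hw.2⟩)
        have hdisj : Disjoint C' Nplus := by
          refine Finset.disjoint_left.2 fun x hx hx' => ?_
          have h1 := hC'A' hx
          rw [mem_sdiff] at h1
          exact h1.2 (hNplusNv hx')
        have hsubC : C' ∪ Nplus ⊆ C := by
          intro x hx
          rcases mem_union.1 hx with hx | hx
          · rcases mem_union.1 hx with hx | hx
            · exact mem_union_left _ (mem_insert_of_mem hx)
            · rw [mem_filter, mem_sdiff] at hx
              refine mem_union_right _ (mem_filter.2 ⟨hx.1.1, ?_⟩)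
              obtain ⟨u, hu, hEu⟩ := hx.2
              exact ⟨u, mem_insert_of_mem hu, hEu⟩
          · rcases mem_insert.1 hx with rfl | hx
            · exact mem_union_left _ (mem_insert_self _ _)
            · rw [houtF, mem_filter] at hx
              exact mem_union_right _
                (mem_filter.2 ⟨hx.1, v, mem_insert_self _ _, hx.2⟩)
        have hsum1 : ∑ x ∈ C' ∪ Nplus, p x ≤ ∑ x ∈ C, p x :=
          sum_le_sum_of_subset_of_nonneg hsubC (fun x _ _ => hp0 x)
        have hsum2 : ∑ x ∈ C' ∪ Nplus, p x = ∑ x ∈ C', p x + ∑ x ∈ Nplus, p x :=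
          sum_union hdisj
        have hvout : v ∉ outF := by
          rw [houtF, mem_filter]; tauto
        have hsum3 : ∑ x ∈ Nplus, p x = p v + ∑ x ∈ outF, p x := by
          rw [hNplus, sum_insert hvout]
        have hsum4 : ∑ x ∈ A \ Nv, p x + ∑ x ∈ Nv, p x = ∑ x ∈ A, p x :=
          sum_sdiff hNvA
        have hvfilter : v ∉ A.filter (fun w => E v w ∨ E w v) := by
          rw [mem_filter]; tauto
        have hdisjoi : Disjoint outF inF := by
          refine Finset.disjoint_left.2 fun x hx hx' => ?_
          rw [houtF, mem_filter] at hx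
          rw [hinF, mem_filter] at hx'
          exact hsimple v x hx.2 hx'.2
        have hfilor : A.filter (fun w => E v w ∨ E w v) = outF ∪ inF := by
          rw [houtF, hinF, ← filter_or]
        have hsum5 : ∑ x ∈ Nv, p x = p v + (∑ x ∈ outF, p x + ∑ x ∈ inF, p x) := by
          rw [hNv, sum_insert hvfilter, hfilor, sum_union hdisjoi]
        -- final arithmetic
        have hgoal : (∑ x ∈ A, p x) / 2 ≤ ∑ x ∈ C, p x := by
          have h6 : (∑ x ∈ A \ Nv, p x) / 2 ≤ ∑ x ∈ C', p x := hS'cov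
          linarith
        exact hgoal
    · -- no suitable vertex : all weights in A vanish
      push_neg at hex
      have hzero : ∀ v ∈ A, p v = 0 := by
        -- the two weighted degree sums agree
        have hfg : (∑ v ∈ A, p v * ∑ w ∈ A.filter (fun w => E v w), p w)
            = ∑ v ∈ A, p v * ∑ w ∈ A.filter (fun w => E w v), p w := by
          have h1 : (∑ v ∈ A, p v * ∑ w ∈ A.filter (fun w => E v w), p w)
              = ∑ v ∈ A, ∑ w ∈ A, if E v w then p v * p w else 0 := by
            refine sum_congr rfl fun v _ => ?_
            rw [mul_sum, sum_filter]
          have h2 : (∑ v ∈ A, p v * ∑ w ∈ A.filter (fun w => E w v), p w)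
              = ∑ v ∈ A, ∑ w ∈ A, if E w v then p v * p w else 0 := by
            refine sum_congr rfl fun v _ => ?_
            rw [mul_sum, sum_filter]
          rw [h1, h2]
          conv_rhs => rw [Finset.sum_comm]
          refine sum_congr rfl fun v _ => sum_congr rfl fun w _ => ?_
          split <;> ring
        have hterm : ∀ v ∈ A,
            p v * (p v + ∑ w ∈ A.filter (fun w => E v w), p w
              - ∑ w ∈ A.filter (fun w => E w v), p w) ≤ 0 := by
          intro v hv
          rcases eq_or_lt_of_le (hp0 v) with h | h
          · rw [← h]; simp
          · have := hex v hv h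
            nlinarith
        have hsumneg : (∑ v ∈ A, p v * (p v
            + ∑ w ∈ A.filter (fun w => E v w), p w
            - ∑ w ∈ A.filter (fun w => E w v), p w)) ≤ 0 :=
          sum_nonpos hterm
        have hexpand : (∑ v ∈ A, p v * (p v
            + ∑ w ∈ A.filter (fun w => E v w), p w
            - ∑ w ∈ A.filter (fun w => E w v), p w))
            = ∑ v ∈ A, p v ^ 2
              + ((∑ v ∈ A, p v * ∑ w ∈ A.filter (fun w => E v w), p w)
              - ∑ v ∈ A, p v * ∑ w ∈ A.filter (fun w => E w v), p w) := by
          rw [← sum_sub_distrib, ← sum_add_distrib]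
          refine sum_congr rfl fun v _ => by ring
        have hsq : (∑ v ∈ A, p v ^ 2) ≤ 0 := by
          rw [hexpand, hfg] at hsumneg
          linarith
        have hsqzero : ∀ v ∈ A, p v ^ 2 = 0 := by
          have h0 : (∑ v ∈ A, p v ^ 2) = 0 :=
            le_antisymm hsq (sum_nonneg fun v _ => sq_nonneg _)
          exact (sum_eq_zero_iff_of_nonneg fun v _ => sq_nonneg _).1 h0
        intro v hv
        exact pow_eq_zero_iff (n := 2) (by norm_num) |>.1 (hsqzero v hv)
      refine ⟨∅, empty_subset _, by simp, ?_⟩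
      have hA0 : ∑ x ∈ A, p x = 0 := sum_eq_zero hzero
      simp [hA0]

/-- In any finite simple loopless digraph with `p : V → [0,1]`, `p(V) > 0`,
there is a stable set `S` with `p(N⁺[S]) ≥ p(V)/2`. -/
theorem exists_stable_set_closed_outweight_ge_half
    {V : Type*} [Fintype V] (E : V → V → Prop)
    (hirr : Irreflexive E) (hsimple : ∀ u v, E u v → ¬ E v u)
    (p : V → ℝ) (hp : ∀ v, 0 ≤ p v ∧ p v ≤ 1)
    (hpos : 0 < ∑ v, p v) :
    ∃ S : Finset V,
      (∀ u ∈ S, ∀ w ∈ S, u ≠ w → ¬ E u w) ∧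
      (∑ v, p v) / 2 ≤
        ∑ x ∈ S ∪ univ.filter (fun x => ∃ u ∈ S, E u x), p x := by
  obtain ⟨S, _, hSind, hScov⟩ :=
    half_cover_aux E hsimple p (fun v => (hp v).1) Finset.univ
  exact ⟨S, hSind, hScov⟩
end

section
/- Every finite simple loopless digraph G satisfies γ*(G) ≤ 2·α(G), where γ*(G) is the fractional domination number and α(G) is the independence number of the underlying undirected graph. Equivalently, there exists a fractional dominating function g : V → [0,1] with ∑_{v∈V} g(v) ≤ 2·α(G). -/
open Finset
open scoped Classical

/-!
Write `p(N⁻[v]) = p v + ∑_{x → v} p x` (this is `closedInWeight E p v`) and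
`q(N⁺[x]) = q x + ∑_{x → v} q v`. By von Neumann's minimax theorem for the bilinear form
`(q, p) ↦ ∑ᵥ q(v) p(N⁻[v])` on pairs of probability vectors, there are `p` and `q` with
`q(N⁺[x]) ≤ p(N⁻[v])` for all vertices `x`, `v`. Now build an independent set greedily: pick a
vertex `v` whose in-weight under `q` is at most its out-weight (one exists by double counting the
arcs) and delete `v` with all its neighbours; the deleted weight is at most `2 q(N⁺[v])`. The
chosen set `S` satisfies `1 ≤ 2 ∑_{s ∈ S} q(N⁺[s]) ≤ 2 α p(N⁻[v])` for every `v`, so `2α p`,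
capped at `1`, is a fractional dominating function of total weight at most `2α`.
-/

theorem min_add_le_min_add_min {α : Type*} [AddCommMonoid α] [LinearOrder α]
    [IsOrderedAddMonoid α] {a b c : α} (ha : 0 ≤ a) (hb : 0 ≤ b) (hc : 0 ≤ c) :
    min (a + b) c ≤ min a c + min b c := by
  rcases le_total a c with h | h <;> rcases le_total b c with h' | h'
  · rw [min_eq_left h, min_eq_left h']
    exact min_le_left _ _
  · rw [min_eq_left h, min_eq_right h']
    exact (min_le_right _ _).trans (le_add_of_nonneg_left ha)
  · rw [min_eq_right h, min_eq_left h']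
    exact (min_le_right _ _).trans (le_add_of_nonneg_right hb)
  · rw [min_eq_right h, min_eq_right h']
    exact (min_le_right _ _).trans (le_add_of_nonneg_right hc)

theorem exists_isSaddlePointOn_stdSimplex {ι κ : Type*} [Fintype ι] [Fintype κ] [Nonempty ι]
    [Nonempty κ] (B : (ι → ℝ) →ₗ[ℝ] (κ → ℝ) →ₗ[ℝ] ℝ) :
    ∃ q ∈ stdSimplex ℝ ι, ∃ p ∈ stdSimplex ℝ κ,
      IsSaddlePointOn (stdSimplex ℝ ι) (stdSimplex ℝ κ) (fun q p => B q p) q p :=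
  Sion.exists_isSaddlePointOn ⟨_, single_mem_stdSimplex ℝ (Classical.arbitrary ι)⟩
    (convex_stdSimplex ℝ ι) (isCompact_stdSimplex ℝ ι)
    (fun p _ => (B.flip p).continuous_of_finiteDimensional.continuousOn.lowerSemicontinuousOn)
    (fun p _ => ((B.flip p).convexOn (convex_stdSimplex ℝ ι)).quasiconvexOn)
    (convex_stdSimplex ℝ κ) ⟨_, single_mem_stdSimplex ℝ (Classical.arbitrary κ)⟩
    (isCompact_stdSimplex ℝ κ)
    (fun q _ => (B q).continuous_of_finiteDimensional.continuousOn.upperSemicontinuousOn)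
    (fun q _ => ((B q).concaveOn (convex_stdSimplex ℝ κ)).quasiconcaveOn)

section InWeight

variable {V : Type*} (E : V → V → Prop)

theorem exists_sum_in_le_sum_out {q : V → ℝ} (hq : ∀ x, 0 ≤ q x) {T : Finset V}
    (hT : T.Nonempty) :
    ∃ v ∈ T, ∑ x ∈ T with E x v, q x ≤ ∑ x ∈ T with E v x, q x := by
  by_contra! hlt
  have hswap : ∑ v ∈ T, q v * ∑ x ∈ T with E v x, q x =
      ∑ v ∈ T, q v * ∑ x ∈ T with E x v, q x := by
    simp only [mul_sum, sum_filter]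
    rw [sum_comm]
    exact sum_congr rfl fun _ _ => sum_congr rfl fun _ _ => by split_ifs <;> ring
  have hzero : ∀ v ∈ T, q v = 0 := by
    intro v hv
    by_contra hqv
    refine (hlt v hv).ne (mul_left_cancel₀ hqv ?_)
    exact (sum_eq_sum_iff_of_le fun v hv =>
      mul_le_mul_of_nonneg_left (hlt v hv).le (hq v)).1 hswap v hv
  obtain ⟨v, hv⟩ := hT
  have := hlt v hv
  rw [sum_eq_zero fun x hx => hzero x (mem_filter.1 hx).1,
    sum_eq_zero fun x hx => hzero x (mem_filter.1 hx).1] at this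
  exact lt_irrefl _ this

theorem sum_filter_eq_or_adj_le {q : V → ℝ} (hq : ∀ x, 0 ≤ q x) (T : Finset V) (v : V) :
    ∑ x ∈ T with (x = v ∨ E v x ∨ E x v), q x ≤
      q v + ∑ x ∈ T with E v x, q x + ∑ x ∈ T with E x v, q x := by
  calc ∑ x ∈ T with (x = v ∨ E v x ∨ E x v), q x
      ≤ ∑ x ∈ T, ((if x = v then q x else 0) + (if E v x then q x else 0) +
          (if E x v then q x else 0)) := by
        rw [sum_filter]
        exact sum_le_sum fun x _ => by split_ifs <;> grind [hq x]
    _ ≤ q v + ∑ x ∈ T with E v x, q x + ∑ x ∈ T with E x v, q x := by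
        rw [sum_add_distrib, sum_add_distrib, sum_ite_eq', ← sum_filter, ← sum_filter]
        split_ifs <;> grind [hq v]

variable [Fintype V]

noncomputable def closedInWeight : (V → ℝ) →ₗ[ℝ] V → ℝ :=
  LinearMap.pi fun v => LinearMap.proj v + ∑ x ∈ univ.filter (E · v), LinearMap.proj x

theorem closedInWeight_apply (p : V → ℝ) (v : V) :
    closedInWeight E p v = p v + ∑ x ∈ univ.filter (fun x => E x v), p x := by
  simp [closedInWeight]

theorem closedInWeight_flip_apply (q : V → ℝ) (v : V) :
    closedInWeight (flip E) q v = q v + ∑ x ∈ univ.filter (fun x => E v x), q x :=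
  closedInWeight_apply _ _ _

theorem closedInWeight_nonneg {p : V → ℝ} (hp : ∀ x, 0 ≤ p x) (v : V) :
    0 ≤ closedInWeight E p v := by
  rw [closedInWeight_apply]
  exact add_nonneg (hp v) (sum_nonneg fun x _ => hp x)

theorem dotProduct_closedInWeight (q p : V → ℝ) :
    q ⬝ᵥ closedInWeight E p = closedInWeight (flip E) q ⬝ᵥ p := by
  simp only [dotProduct, closedInWeight_apply, mul_add, add_mul, sum_add_distrib, mul_sum,
    sum_mul, sum_filter, mul_ite, ite_mul, mul_zero, zero_mul]
  rw [sum_comm]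
  rfl

theorem min_closedInWeight_one_le {y : V → ℝ} (hy : ∀ x, 0 ≤ y x) (v : V) :
    min (closedInWeight E y v) 1 ≤ closedInWeight E (fun x => min (y x) 1) v := by
  rw [closedInWeight_apply, closedInWeight_apply]
  calc min (y v + ∑ x ∈ univ.filter (E · v), y x) 1
      ≤ min (y v) 1 + min (∑ x ∈ univ.filter (E · v), y x) 1 :=
        min_add_le_min_add_min (hy v) (sum_nonneg fun x _ => hy x) zero_le_one
    _ ≤ min (y v) 1 + ∑ x ∈ univ.filter (E · v), min (y x) 1 :=
        add_le_add_right (le_sum_of_subadditive_on_pred (fun t => min t 1) (0 ≤ ·) (by simp)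
          (fun _ _ ha hb => min_add_le_min_add_min ha hb zero_le_one)
          (fun _ _ => add_nonneg) y fun x _ => hy x) _

theorem exists_closedInWeight_flip_le_closedInWeight [Nonempty V] :
    ∃ q ∈ stdSimplex ℝ V, ∃ p ∈ stdSimplex ℝ V,
      ∀ x v, closedInWeight (flip E) q x ≤ closedInWeight E p v := by
  obtain ⟨q, hq, p, hp, hqp⟩ :=
    exists_isSaddlePointOn_stdSimplex ((dotProductBilin ℝ ℝ).compl₂ (closedInWeight E))
  refine ⟨q, hq, p, hp, fun x v => ?_⟩
  have := hqp _ (single_mem_stdSimplex ℝ v) _ (single_mem_stdSimplex ℝ x)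
  simpa [dotProduct_closedInWeight E q, dotProduct_single, single_dotProduct] using this

theorem exists_pairwise_sum_le_two_mul_sum_closedInWeight {q : V → ℝ} (hq : ∀ x, 0 ≤ q x)
    (T : Finset V) :
    ∃ S ⊆ T, (S : Set V).Pairwise (fun u w => ¬ E u w) ∧
      ∑ x ∈ T, q x ≤ 2 * ∑ s ∈ S, closedInWeight (flip E) q s := by
  induction T using Finset.strongInduction with
  | H T ih =>
  obtain rfl | hT := T.eq_empty_or_nonempty
  · exact ⟨∅, subset_rfl, by simp, by simp⟩
  obtain ⟨v, hvT, hv⟩ := exists_sum_in_le_sum_out E hq hT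
  obtain ⟨S, hST, hS, hsum⟩ :=
    ih {x ∈ T | ¬(x = v ∨ E v x ∨ E x v)} (filter_ssubset.2 ⟨v, hvT, by simp⟩)
  have hnot : ∀ s ∈ S, ¬(s = v ∨ E v s ∨ E s v) := fun s hs => (mem_filter.1 (hST hs)).2
  refine ⟨insert v S, insert_subset hvT (hST.trans (filter_subset _ _)), ?_, ?_⟩
  · rw [coe_insert, Set.pairwise_insert]
    exact ⟨hS, fun s hs _ => by grind⟩
  · have hout : ∑ x ∈ T with E v x, q x ≤ ∑ x ∈ univ with E v x, q x :=
      sum_le_sum_of_subset_of_nonneg (filter_subset_filter _ (subset_univ T)) fun x _ _ => hq x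
    have hnbhd := sum_filter_eq_or_adj_le E hq T v
    have hsplit : ∑ x ∈ T, q x = ∑ x ∈ T with (x = v ∨ E v x ∨ E x v), q x +
        ∑ x ∈ T with ¬(x = v ∨ E v x ∨ E x v), q x :=
      (sum_filter_add_sum_filter_not _ _ _).symm
    rw [sum_insert fun h => hnot v h (Or.inl rfl), closedInWeight_flip_apply]
    linarith [hq v]

theorem exists_nonneg_sum_eq_two_mul_one_le_closedInWeight [Nonempty V] (a : ℕ)
    (hα : ∀ S : Finset V, (S : Set V).Pairwise (fun u w => ¬ E u w) → #S ≤ a) :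
    ∃ y : V → ℝ, (∀ x, 0 ≤ y x) ∧ ∑ x, y x = 2 * a ∧ ∀ v, 1 ≤ closedInWeight E y v := by
  obtain ⟨q, hq, p, hp, hqp⟩ := exists_closedInWeight_flip_le_closedInWeight E
  obtain ⟨S, -, hS, hsum⟩ := exists_pairwise_sum_le_two_mul_sum_closedInWeight E hq.1 univ
  have ha : (0 : ℝ) ≤ 2 * a := by positivity
  refine ⟨(2 * a : ℝ) • p, fun x => smul_nonneg ha (hp.1 x), ?_, fun v => ?_⟩
  · simp [← mul_sum, hp.2]
  calc (1 : ℝ) = ∑ x, q x := hq.2.symm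
    _ ≤ 2 * ∑ s ∈ S, closedInWeight (flip E) q s := hsum
    _ ≤ 2 * ∑ s ∈ S, closedInWeight E p v := by gcongr with s; exact hqp s v
    _ = 2 * #S * closedInWeight E p v := by rw [sum_const, nsmul_eq_mul]; ring
    _ ≤ 2 * a * closedInWeight E p v := by
        gcongr
        · exact closedInWeight_nonneg E hp.1 v
        · exact_mod_cast hα S hS
    _ = closedInWeight E ((2 * a : ℝ) • p) v := by simp

end InWeight

theorem fractional_domination_le_two_mul_indepNum_general
    {V : Type*} [Fintype V] (E : V → V → Prop)
    (a : ℕ)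
    (ha : IsGreatest {n : ℕ | ∃ S : Finset V,
        (∀ u ∈ S, ∀ w ∈ S, u ≠ w → ¬ E u w) ∧ S.card = n} a) :
    ∃ g : V → ℝ,
      (∀ v, 0 ≤ g v ∧ g v ≤ 1) ∧
      (∀ v, 1 ≤ g v + ∑ x ∈ univ.filter (fun x => E x v), g x) ∧
      ∑ v, g v ≤ 2 * a := by
  rcases isEmpty_or_nonempty V with hV | hV
  · exact ⟨0, isEmptyElim, isEmptyElim, by simp⟩
  obtain ⟨y, hy, hsum, hdom⟩ := exists_nonneg_sum_eq_two_mul_one_le_closedInWeight E a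
    fun S hS => ha.2 ⟨S, fun u hu w hw => hS hu hw, rfl⟩
  refine ⟨fun x => min (y x) 1, fun v => ⟨le_min (hy v) zero_le_one, min_le_right _ _⟩,
    fun v => ?_, ?_⟩
  · simpa only [closedInWeight_apply] using
      (le_min (hdom v) le_rfl).trans (min_closedInWeight_one_le E hy v)
  · calc ∑ v, min (y v) 1 ≤ ∑ v, y v := sum_le_sum fun v _ => min_le_left _ _
      _ = 2 * a := hsum

/-- Every finite simple loopless digraph `G` has a fractional dominating function `g`
with total weight at most `2·α(G)`: i.e. `γ*(G) ≤ 2·α(G)`. -/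
theorem fractional_domination_le_two_mul_indepNum
    {V : Type*} [Fintype V] (E : V → V → Prop)
    (hirr : Irreflexive E) (hsimple : ∀ u v, E u v → ¬ E v u)
    (a : ℕ)
    (ha : IsGreatest {n : ℕ | ∃ S : Finset V,
        (∀ u ∈ S, ∀ w ∈ S, u ≠ w → ¬ E u w) ∧ S.card = n} a) :
    ∃ g : V → ℝ,
      (∀ v, 0 ≤ g v ∧ g v ≤ 1) ∧
      (∀ v, 1 ≤ g v + ∑ x ∈ univ.filter (fun x => E x v), g x) ∧
      ∑ v, g v ≤ 2 * a :=
  fractional_domination_le_two_mul_indepNum_general E a ha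
end

section
/- Every finite simple loopless digraph G on n ≥ 1 vertices has a dominating set D ⊆ V such that the chromatic number of the underlying undirected graph of the induced subdigraph G[D] is at most ⌈log₂(n+1)⌉. -/
open Finset
open scoped Classical

section Aux
variable {V : Type*} (E : V → V → Prop)

/-- Double counting: some vertex has in-degree ≤ out-degree within `S`. -/
lemma exists_balanced_vertex (S : Finset V) (hS : S.Nonempty) :
    ∃ v ∈ S, (S.filter (fun w => E w v)).card ≤ (S.filter (fun w => E v w)).card := by
  by_contra h
  push_neg at h
  have hsum : ∑ v ∈ S, (S.filter (fun w => E v w)).card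
      = ∑ v ∈ S, (S.filter (fun w => E w v)).card := by
    simp_rw [Finset.card_filter]
    rw [Finset.sum_comm]
  have hlt : ∑ v ∈ S, (S.filter (fun w => E v w)).card
      < ∑ v ∈ S, (S.filter (fun w => E w v)).card :=
    Finset.sum_lt_sum_of_nonempty hS (fun v hv => h v hv)
  omega

/-- There is an independent set whose closed out-neighborhood covers more than half of `S`. -/
lemma exists_indep_half (hirr : Irreflexive E) (hsimple : ∀ u v, E u v → ¬ E v u) :
    ∀ n (S : Finset V), S.card ≤ n → S.Nonempty →
    ∃ I ⊆ S, (∀ u ∈ I, ∀ w ∈ I, ¬ E u w) ∧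
      S.card + 1 ≤ 2 * (S.filter (fun x => x ∈ I ∨ ∃ u ∈ I, E u x)).card := by
  intro n
  induction n with
  | zero =>
    intro S hc hne
    exact absurd (Finset.card_eq_zero.mp (Nat.le_zero.mp hc)) hne.ne_empty
  | succ n ih =>
    intro S hc hne
    obtain ⟨v, hv, hdeg⟩ := exists_balanced_vertex E S hne
    set A1 := S.filter (fun w => E v w) with hA1
    set A2 := S.filter (fun w => E w v) with hA2
    set W := S.filter (fun w => w ≠ v ∧ ¬ E v w ∧ ¬ E w v) with hWdef
    -- partition count
    have hvA1 : v ∉ A1 := by simp [hA1, hirr v]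
    have hvA2 : v ∉ A2 := by simp [hA2, hirr v]
    have hA12 : Disjoint A1 A2 := by
      rw [Finset.disjoint_left]
      intro a h1 h2
      rw [hA1, Finset.mem_filter] at h1
      rw [hA2, Finset.mem_filter] at h2
      exact hsimple v a h1.2 h2.2
    have hunion : S = insert v (A1 ∪ A2 ∪ W) := by
      ext x
      simp only [Finset.mem_insert, Finset.mem_union, hA1, hA2, hWdef, Finset.mem_filter]
      constructor
      · intro hx
        by_cases hxv : x = v
        · exact Or.inl hxv
        · by_cases h1 : E v x
          · exact Or.inr (Or.inl (Or.inl ⟨hx, h1⟩))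
          · by_cases h2 : E x v
            · exact Or.inr (Or.inl (Or.inr ⟨hx, h2⟩))
            · exact Or.inr (Or.inr ⟨hx, hxv, h1, h2⟩)
      · rintro (rfl | (⟨hx, _⟩ | ⟨hx, _⟩) | ⟨hx, _⟩) <;> first | exact hv | exact hx
    have hvW : v ∉ W := by simp [hWdef]
    have hA1W : Disjoint A1 W := by
      rw [Finset.disjoint_left]
      intro a h1 h2
      rw [hA1, Finset.mem_filter] at h1
      rw [hWdef, Finset.mem_filter] at h2
      exact h2.2.2.1 h1.2
    have hA2W : Disjoint A2 W := by
      rw [Finset.disjoint_left]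
      intro a h1 h2
      rw [hA2, Finset.mem_filter] at h1
      rw [hWdef, Finset.mem_filter] at h2
      exact h2.2.2.2 h1.2
    have hScard : S.card = 1 + A1.card + A2.card + W.card := by
      rw [hunion, Finset.card_insert_of_notMem (by simp [hvA1, hvA2, hvW]),
        Finset.card_union_of_disjoint (Finset.disjoint_union_left.mpr ⟨hA1W, hA2W⟩),
        Finset.card_union_of_disjoint hA12]
      ring
    by_cases hW : W.Nonempty
    · -- recurse on W
      have hWcard : W.card ≤ n := by
        have hsub : W ⊆ S := Finset.filter_subset _ _
        have : W.card < S.card := Finset.card_lt_card ⟨hsub, fun hss => hvW (hss hv)⟩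
        omega
      obtain ⟨I', hI'sub, hI'ind, hI'cov⟩ := ih W hWcard hW
      refine ⟨insert v I', ?_, ?_, ?_⟩
      · intro x hx
        rcases Finset.mem_insert.mp hx with rfl | hx
        · exact hv
        · exact (Finset.filter_subset _ _) (hI'sub hx)
      · intro u hu w hw
        rcases Finset.mem_insert.mp hu with hu0 | hu0 <;>
          rcases Finset.mem_insert.mp hw with hw0 | hw0
        · rw [hu0, hw0]; exact hirr v
        · rw [hu0]; exact ((Finset.mem_filter.mp (hI'sub hw0)).2).2.1
        · rw [hw0]; exact ((Finset.mem_filter.mp (hI'sub hu0)).2).2.2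
        · exact hI'ind u hu0 w hw0
      · -- cardinality
        set C := S.filter (fun x => x ∈ insert v I' ∨ ∃ u ∈ insert v I', E u x) with hC
        set CW := W.filter (fun x => x ∈ I' ∨ ∃ u ∈ I', E u x) with hCW
        have h1 : insert v A1 ∪ CW ⊆ C := by
          intro x hx
          rw [hC, Finset.mem_filter]
          rcases Finset.mem_union.mp hx with hx | hx
          · rcases Finset.mem_insert.mp hx with rfl | hx
            · exact ⟨hv, Or.inl (Finset.mem_insert_self _ _)⟩
            · rw [hA1, Finset.mem_filter] at hx
              exact ⟨hx.1, Or.inr ⟨v, Finset.mem_insert_self _ _, hx.2⟩⟩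
          · rw [hCW, Finset.mem_filter] at hx
            refine ⟨(Finset.filter_subset _ _) hx.1, ?_⟩
            rcases hx.2 with h | ⟨u, hu, hE⟩
            · exact Or.inl (Finset.mem_insert_of_mem h)
            · exact Or.inr ⟨u, Finset.mem_insert_of_mem hu, hE⟩
        have h2 : Disjoint (insert v A1) CW := by
          rw [Finset.disjoint_left]
          intro a ha haW
          have haW' : a ∈ W := (Finset.filter_subset _ _) haW
          rcases Finset.mem_insert.mp ha with rfl | ha
          · exact hvW haW'
          · exact (Finset.disjoint_left.mp hA1W) ha haW'
        have h3 : (insert v A1 ∪ CW).card ≤ C.card := Finset.card_le_card h1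
        rw [Finset.card_union_of_disjoint h2, Finset.card_insert_of_notMem hvA1] at h3
        have hA2le : A2.card ≤ A1.card := hdeg
        omega
    · -- W empty: take I = {v}
      rw [Finset.not_nonempty_iff_eq_empty] at hW
      refine ⟨{v}, by simpa using hv, ?_, ?_⟩
      · intro u hu w hw
        rw [Finset.mem_singleton] at hu hw
        rw [hu, hw]; exact hirr v
      · have h1 : insert v A1 ⊆
            S.filter (fun x => x ∈ ({v} : Finset V) ∨ ∃ u ∈ ({v} : Finset V), E u x) := by
          intro x hx
          rw [Finset.mem_filter]
          rcases Finset.mem_insert.mp hx with hx0 | hx0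
          · rw [hx0]
            exact ⟨hv, Or.inl (Finset.mem_singleton_self v)⟩
          · rw [hA1, Finset.mem_filter] at hx0
            exact ⟨hx0.1, Or.inr ⟨v, Finset.mem_singleton_self v, hx0.2⟩⟩
        have h3 := Finset.card_le_card h1
        rw [Finset.card_insert_of_notMem hvA1] at h3
        have hA2le : A2.card ≤ A1.card := hdeg
        have hW0 : W.card = 0 := by rw [hW]; simp
        omega

/-- Main induction: a dominating set of `S` with a proper coloring using
`⌈log₂(|S|+1)⌉` colors. -/
lemma main_aux (hirr : Irreflexive E) (hsimple : ∀ u v, E u v → ¬ E v u) :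
    ∀ n (S : Finset V), S.card ≤ n →
    ∃ D ⊆ S, (∀ v ∈ S, v ∈ D ∨ ∃ u ∈ D, E u v) ∧
      ∃ c : V → ℕ,
        (∀ v ∈ D, c v < Nat.clog 2 (S.card + 1)) ∧
        (∀ u ∈ D, ∀ w ∈ D, E u w → c u ≠ c w) := by
  intro n
  induction n with
  | zero =>
    intro S hc
    have : S = ∅ := Finset.card_eq_zero.mp (Nat.le_zero.mp hc)
    subst this
    exact ⟨∅, Finset.Subset.refl _, by simp, fun _ => 0, by simp, by simp⟩
  | succ n ih =>
    intro S hc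
    rcases S.eq_empty_or_nonempty with rfl | hne
    · exact ⟨∅, Finset.Subset.refl _, by simp, fun _ => 0, by simp, by simp⟩
    obtain ⟨I, hIsub, hIind, hIcov⟩ :=
      exists_indep_half E hirr hsimple S.card S le_rfl hne
    set C := S.filter (fun x => x ∈ I ∨ ∃ u ∈ I, E u x) with hC
    set B := S \ C with hB
    have hCsub : C ⊆ S := Finset.filter_subset _ _
    have hBcard : B.card = S.card - C.card := Finset.card_sdiff_of_subset hCsub
    have hCcard : S.card + 1 ≤ 2 * C.card := hIcov
    have hBlt : B.card ≤ n := by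
      have hCS : C.card ≤ S.card := Finset.card_le_card hCsub
      omega
    obtain ⟨D', hD'sub, hD'dom, c', hc'bound, hc'prop⟩ := ih B hBlt
    set k := Nat.clog 2 (S.card + 1) with hk
    have hk1 : 1 ≤ k := by
      by_contra h
      have hk0 : Nat.clog 2 (S.card + 1) ≤ 0 := by omega
      have h2 : S.card + 1 ≤ 2 ^ 0 :=
        (Nat.clog_le_iff_le_pow (b := 2) (by norm_num)).mp hk0
      have h3 := hne.card_pos
      simp only [pow_zero] at h2
      omega
    have hlt : Nat.clog 2 (B.card + 1) < k := by
      have hpow : S.card + 1 ≤ 2 ^ k := Nat.le_pow_clog (by norm_num) _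
      have h2B : 2 * (B.card + 1) ≤ 2 ^ k := by
        have hCS : C.card ≤ S.card := Finset.card_le_card hCsub
        omega
      have hBpow : B.card + 1 ≤ 2 ^ (k - 1) := by
        have : 2 ^ k = 2 * 2 ^ (k - 1) := by
          rw [← pow_succ']
          congr 1
          omega
        omega
      have := (Nat.clog_le_iff_le_pow (b := 2) (by norm_num)).mpr hBpow
      omega
    have hIC : I ⊆ C := by
      intro x hx
      rw [hC, Finset.mem_filter]
      exact ⟨hIsub hx, Or.inl hx⟩
    have hID' : ∀ x ∈ I, x ∉ D' := by
      intro x hx hxD'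
      have : x ∈ B := hD'sub hxD'
      rw [hB, Finset.mem_sdiff] at this
      exact this.2 (hIC hx)
    refine ⟨I ∪ D', ?_, ?_, fun x => if x ∈ I then k - 1 else c' x, ?_, ?_⟩
    · intro x hx
      rcases Finset.mem_union.mp hx with hx | hx
      · exact hIsub hx
      · exact (Finset.sdiff_subset) (hD'sub hx)
    · intro v hvS
      by_cases hvC : v ∈ C
      · rw [hC, Finset.mem_filter] at hvC
        rcases hvC.2 with h | ⟨u, hu, hE⟩
        · exact Or.inl (Finset.mem_union_left _ h)
        · exact Or.inr ⟨u, Finset.mem_union_left _ hu, hE⟩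
      · have hvB : v ∈ B := Finset.mem_sdiff.mpr ⟨hvS, hvC⟩
        rcases hD'dom v hvB with h | ⟨u, hu, hE⟩
        · exact Or.inl (Finset.mem_union_right _ h)
        · exact Or.inr ⟨u, Finset.mem_union_right _ hu, hE⟩
    · intro v hvD
      by_cases hvI : v ∈ I
      · simp only [hvI, if_pos]
        omega
      · simp only [hvI, if_neg, if_false]
        have hvD' : v ∈ D' := by
          rcases Finset.mem_union.mp hvD with h | h
          · exact absurd h hvI
          · exact h
        have := hc'bound v hvD'
        omega
    · intro u huD w hwD hE
      by_cases huI : u ∈ I <;> by_cases hwI : w ∈ I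
      · exact absurd hE (hIind u huI w hwI)
      · have hwD' : w ∈ D' := by
          rcases Finset.mem_union.mp hwD with h | h
          · exact absurd h hwI
          · exact h
        have := hc'bound w hwD'
        simp only [huI, hwI, if_pos, if_neg, if_false]
        omega
      · have huD' : u ∈ D' := by
          rcases Finset.mem_union.mp huD with h | h
          · exact absurd h huI
          · exact h
        have := hc'bound u huD'
        simp only [huI, hwI, if_pos, if_neg, if_false]
        omega
      · have huD' : u ∈ D' := by
          rcases Finset.mem_union.mp huD with h | h
          · exact absurd h huI
          · exact h
        have hwD' : w ∈ D' := by
          rcases Finset.mem_union.mp hwD with h | h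
          · exact absurd h hwI
          · exact h
        simp only [huI, hwI, if_neg, if_false]
        exact hc'prop u huD' w hwD' hE

end Aux

/-- Every finite simple loopless digraph on `n ≥ 1` vertices has a dominating set `D`
whose underlying undirected induced graph is properly colorable with at most
`⌈log₂(n+1)⌉` colors. -/
theorem exists_dominating_set_with_small_chromatic_number
    {V : Type*} [Fintype V] [Nonempty V] (E : V → V → Prop)
    (hirr : Irreflexive E) (hsimple : ∀ u v, E u v → ¬ E v u) :
    ∃ D : Finset V,
      (∀ v : V, v ∈ D ∨ ∃ u ∈ D, E u v) ∧
      ∃ c : V → ℕ,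
        (∀ v ∈ D, c v < Nat.clog 2 (Fintype.card V + 1)) ∧
        (∀ u ∈ D, ∀ w ∈ D, E u w → c u ≠ c w) := by
  obtain ⟨D, hDsub, hDdom, c, hcbound, hcprop⟩ :=
    main_aux E hirr hsimple (Finset.univ : Finset V).card Finset.univ le_rfl
  refine ⟨D, fun v => hDdom v (Finset.mem_univ v), c, ?_, hcprop⟩
  simpa [Finset.card_univ] using hcbound
end

section
/- For every finite simple loopless digraph G on n vertices, if α(G) ≥ log₂ n then γ(G) ≤ α(G)², where γ(G) is the domination number and α(G) is the independence number of the underlying undirected graph. -/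
open Finset
open scoped Classical

/-- Double counting of edges inside `U`. -/
private lemma aux_double_count {V : Type*} (E : V → V → Prop) (U : Finset V) :
    ∑ v ∈ U, (U.filter (fun w => E v w)).card
      = ∑ w ∈ U, (U.filter (fun v => E v w)).card := by
  simp only [Finset.card_filter]
  exact Finset.sum_comm

/-- Key halving lemma: any nonempty finite set `U` of vertices contains an independent
set `I` such that the set of vertices of `U` not dominated by `I` can be covered by
a set of size at most `(|U|-1)/2`. -/
private lemma aux_half {V : Type*} (E : V → V → Prop)
    (hirr : Irreflexive E) (hs : ∀ u v, E u v → ¬ E v u) :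
    ∀ n : ℕ, ∀ U : Finset V, U.card ≤ n → U.Nonempty →
      ∃ I ⊆ U, (∀ u ∈ I, ∀ w ∈ I, u ≠ w → ¬ E u w) ∧
        ∃ R ⊆ U, R.card ≤ (U.card - 1) / 2 ∧
          ∀ u ∈ U, u ∈ R ∨ u ∈ I ∨ ∃ w ∈ I, E w u := by
  intro n
  induction n using Nat.strong_induction_on with
  | _ n ih =>
    intro U hUn hne
    -- find a vertex whose closed out-neighborhood beats its in-neighborhood
    have key : ∑ v ∈ U, (U.filter (fun w => E w v)).card
        < ∑ v ∈ U, (insert v (U.filter (fun w => E v w))).card := by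
      have h1 : ∀ v ∈ U, (insert v (U.filter (fun w => E v w))).card
          = (U.filter (fun w => E v w)).card + 1 := by
        intro v hv
        rw [Finset.card_insert_of_notMem]
        simp only [Finset.mem_filter]
        exact fun h => hirr v h.2
      rw [Finset.sum_congr rfl h1, Finset.sum_add_distrib]
      rw [← aux_double_count E U]
      have : 0 < ∑ _v ∈ U, 1 := by simpa using hne.card_pos
      omega
    obtain ⟨v, hvU, hlt⟩ := Finset.exists_lt_of_sum_lt key
    set B : Finset V := insert v (U.filter (fun w => E v w)) with hB
    set C : Finset V := U.filter (fun w => E w v) with hC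
    set H : Finset V := U.filter (fun w => w ≠ v ∧ ¬ E v w ∧ ¬ E w v) with hH
    have hBU : B ⊆ U := by
      intro w hw
      rcases Finset.mem_insert.mp hw with rfl | hw
      · exact hvU
      · exact (Finset.mem_filter.mp hw).1
    have hCU : C ⊆ U := Finset.filter_subset _ _
    have hHU : H ⊆ U := Finset.filter_subset _ _
    have hmemB : ∀ w, w ∈ B ↔ w ∈ U ∧ (w = v ∨ E v w) := by
      intro w
      constructor
      · intro hw
        rcases Finset.mem_insert.mp hw with rfl | hw
        · exact ⟨hvU, Or.inl rfl⟩
        · exact ⟨(Finset.mem_filter.mp hw).1, Or.inr (Finset.mem_filter.mp hw).2⟩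
      · rintro ⟨hwU, rfl | hw⟩
        · exact Finset.mem_insert_self _ _
        · exact Finset.mem_insert_of_mem (Finset.mem_filter.mpr ⟨hwU, hw⟩)
    have hdisjBC : Disjoint B C := by
      rw [Finset.disjoint_left]
      intro w hwB hwC
      have h1 := (hmemB w).mp hwB
      have h2 := Finset.mem_filter.mp hwC
      rcases h1.2 with rfl | h
      · exact hirr w h2.2
      · exact hs _ _ h h2.2
    have hdisjBCH : Disjoint (B ∪ C) H := by
      rw [Finset.disjoint_left]
      intro w hw hwH
      have h2 := (Finset.mem_filter.mp hwH).2
      rcases Finset.mem_union.mp hw with hwB | hwC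
      · rcases ((hmemB w).mp hwB).2 with rfl | h
        · exact h2.1 rfl
        · exact h2.2.1 h
      · exact h2.2.2 (Finset.mem_filter.mp hwC).2
    have hcoverU : ∀ w ∈ U, w ∈ B ∨ w ∈ C ∨ w ∈ H := by
      intro w hw
      by_cases h1 : w = v ∨ E v w
      · exact Or.inl ((hmemB w).mpr ⟨hw, h1⟩)
      · push_neg at h1
        by_cases h2 : E w v
        · exact Or.inr (Or.inl (Finset.mem_filter.mpr ⟨hw, h2⟩))
        · exact Or.inr (Or.inr (Finset.mem_filter.mpr ⟨hw, h1.1, h1.2, h2⟩))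
    have hcard : B.card + C.card + H.card ≤ U.card := by
      have h1 : B ∪ C ∪ H ⊆ U :=
        Finset.union_subset (Finset.union_subset hBU hCU) hHU
      have h2 := Finset.card_le_card h1
      rw [Finset.card_union_of_disjoint hdisjBCH,
        Finset.card_union_of_disjoint hdisjBC] at h2
      exact h2
    have hCB : C.card + 1 ≤ B.card := hlt
    rcases H.eq_empty_or_nonempty with hHe | hHne
    · -- I = {v}, R = C
      refine ⟨{v}, by simpa using hvU, by simp, C, hCU, ?_, ?_⟩
      · have hHc : H.card = 0 := by rw [hHe]; simp
        omega
      · intro u hu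
        rcases hcoverU u hu with h | h | h
        · rcases ((hmemB u).mp h).2 with rfl | h'
          · exact Or.inr (Or.inl (Finset.mem_singleton_self _))
          · exact Or.inr (Or.inr ⟨v, Finset.mem_singleton_self _, h'⟩)
        · exact Or.inl h
        · rw [hHe] at h; exact absurd h (Finset.notMem_empty u)
    · -- recurse on H
      have h2B : 1 ≤ B.card := Finset.card_pos.mpr ⟨v, Finset.mem_insert_self _ _⟩
      have hHlt : H.card < n := by omega
      obtain ⟨I', hI'H, hI'ind, R', hR'H, hR'card, hR'cov⟩ :=
        ih H.card hHlt H le_rfl hHne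
      refine ⟨insert v I', ?_, ?_, C ∪ R', ?_, ?_, ?_⟩
      · intro w hw
        rcases Finset.mem_insert.mp hw with rfl | hw
        · exact hvU
        · exact hHU (hI'H hw)
      · -- independence
        intro x hx y hy hxy
        rcases Finset.mem_insert.mp hx with hxv | hxI
        · rcases Finset.mem_insert.mp hy with hyv | hyI
          · exact absurd (hxv.trans hyv.symm) hxy
          · subst hxv
            exact ((Finset.mem_filter.mp (hI'H hyI)).2).2.1
        · rcases Finset.mem_insert.mp hy with hyv | hyI
          · subst hyv
            exact ((Finset.mem_filter.mp (hI'H hxI)).2).2.2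
          · exact hI'ind x hxI y hyI hxy
      · exact Finset.union_subset hCU (hR'H.trans hHU)
      · have h1 := Finset.card_union_le C R'
        have h3 : 1 ≤ H.card := hHne.card_pos
        omega
      · intro u hu
        rcases hcoverU u hu with h | h | h
        · rcases ((hmemB u).mp h).2 with rfl | h'
          · exact Or.inr (Or.inl (Finset.mem_insert_self _ _))
          · exact Or.inr (Or.inr ⟨v, Finset.mem_insert_self _ _, h'⟩)
        · exact Or.inl (Finset.mem_union_left _ h)
        · rcases hR'cov u h with h' | h' | ⟨w, hw, hEw⟩
          · exact Or.inl (Finset.mem_union_right _ h')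
          · exact Or.inr (Or.inl (Finset.mem_insert_of_mem h'))
          · exact Or.inr (Or.inr ⟨w, Finset.mem_insert_of_mem hw, hEw⟩)

/-- Iterated halving: if `|U| ≤ 2^k - 1` then `U` has a dominating set of size `≤ k*a`. -/
private lemma aux_iter {V : Type*} (E : V → V → Prop)
    (hirr : Irreflexive E) (hs : ∀ u v, E u v → ¬ E v u) (a : ℕ)
    (hb : ∀ S : Finset V, (∀ u ∈ S, ∀ w ∈ S, u ≠ w → ¬ E u w) → S.card ≤ a) :
    ∀ k : ℕ, ∀ U : Finset V, U.card ≤ 2 ^ k - 1 →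
      ∃ D : Finset V, D ⊆ U ∧ D.card ≤ k * a ∧ ∀ u ∈ U, u ∈ D ∨ ∃ w ∈ D, E w u := by
  intro k
  induction k with
  | zero =>
    intro U hU
    have : U = ∅ := Finset.card_eq_zero.mp (by omega)
    subst this
    exact ⟨∅, Finset.Subset.refl _, by simp, by simp⟩
  | succ k ih =>
    intro U hU
    rcases U.eq_empty_or_nonempty with rfl | hne
    · exact ⟨∅, Finset.Subset.refl _, by simp, by simp⟩
    obtain ⟨I, hIU, hIind, R, hRU, hRcard, hRcov⟩ :=
      aux_half E hirr hs U.card U le_rfl hne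
    have hRcard' : R.card ≤ 2 ^ k - 1 := by
      have h2 : 2 ^ (k + 1) = 2 * 2 ^ k := by ring
      have h3 : 1 ≤ 2 ^ k := Nat.one_le_two_pow
      omega
    obtain ⟨D', hD'R, hD'card, hD'dom⟩ := ih R hRcard'
    refine ⟨I ∪ D', Finset.union_subset hIU (hD'R.trans hRU), ?_, ?_⟩
    · have h1 := Finset.card_union_le I D'
      have h2 := hb I hIind
      have h3 : (k + 1) * a = a + k * a := by ring
      omega
    · intro u huU
      rcases hRcov u huU with h | h | ⟨w, hw, hEw⟩
      · rcases hD'dom u h with h' | ⟨w, hw, hEw⟩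
        · exact Or.inl (Finset.mem_union_right _ h')
        · exact Or.inr ⟨w, Finset.mem_union_right _ hw, hEw⟩
      · exact Or.inl (Finset.mem_union_left _ h)
      · exact Or.inr ⟨w, Finset.mem_union_left _ hw, hEw⟩

/-- If the independence number `a` of a finite simple loopless digraph on `n` vertices
satisfies `a ≥ log₂ n`, then the digraph has a dominating set of size at most `a²`. -/
theorem domination_le_indepNum_sq_of_large_indepNum
    {V : Type*} [Fintype V] (E : V → V → Prop)
    (hirr : Irreflexive E) (hsimple : ∀ u v, E u v → ¬ E v u)
    (a : ℕ)
    (ha : IsGreatest {n : ℕ | ∃ S : Finset V,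
        (∀ u ∈ S, ∀ w ∈ S, u ≠ w → ¬ E u w) ∧ S.card = n} a)
    (hlarge : Real.logb 2 (Fintype.card V) ≤ (a : ℝ)) :
    ∃ D : Finset V,
      (∀ v : V, v ∈ D ∨ ∃ u ∈ D, E u v) ∧
      D.card ≤ a ^ 2 := by
  have hb : ∀ S : Finset V, (∀ u ∈ S, ∀ w ∈ S, u ≠ w → ¬ E u w) → S.card ≤ a :=
    fun S h => ha.2 ⟨S, h, rfl⟩
  rcases isEmpty_or_nonempty V with hV | hV
  · exact ⟨∅, fun v => (hV.false v).elim, by positivity⟩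
  have hn1 : 1 ≤ Fintype.card V := Fintype.card_pos
  have ha1 : 1 ≤ a := by
    obtain ⟨v⟩ := hV
    exact hb {v} (by simp)
  -- card V ≤ 2 ^ a
  have hcard : Fintype.card V ≤ 2 ^ a := by
    have hpos : (0 : ℝ) < (Fintype.card V : ℝ) := by exact_mod_cast hn1
    have h1 : (Fintype.card V : ℝ) = (2 : ℝ) ^ Real.logb 2 (Fintype.card V) :=
      (Real.rpow_logb (by norm_num) (by norm_num) hpos).symm
    have h2 : (2 : ℝ) ^ Real.logb 2 (Fintype.card V) ≤ (2 : ℝ) ^ (a : ℝ) :=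
      Real.rpow_le_rpow_of_exponent_le one_le_two hlarge
    have h3 : (2 : ℝ) ^ (a : ℝ) = ((2 ^ a : ℕ) : ℝ) := by
      rw [Real.rpow_natCast]; push_cast; ring
    have : (Fintype.card V : ℝ) ≤ ((2 ^ a : ℕ) : ℝ) := by
      rw [h1]; rw [h3] at h2; exact h2
    exact_mod_cast this
  -- one halving round on univ
  have hne : (Finset.univ : Finset V).Nonempty := Finset.univ_nonempty
  obtain ⟨I, hIU, hIind, R, hRU, hRcard, hRcov⟩ :=
    aux_half E hirr hsimple (Finset.univ : Finset V).card Finset.univ le_rfl hne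
  have hRcard' : R.card ≤ 2 ^ (a - 1) - 1 := by
    have h2 : 2 ^ a = 2 * 2 ^ (a - 1) := by
      rw [← pow_succ']
      congr 1
      omega
    have h3 : 1 ≤ 2 ^ (a - 1) := Nat.one_le_two_pow
    have h4 : (Finset.univ : Finset V).card = Fintype.card V := Finset.card_univ
    omega
  obtain ⟨D', hD'R, hD'card, hD'dom⟩ := aux_iter E hirr hsimple a hb (a - 1) R hRcard'
  refine ⟨I ∪ D', ?_, ?_⟩
  · intro v
    rcases hRcov v (Finset.mem_univ v) with h | h | ⟨w, hw, hEw⟩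
    · rcases hD'dom v h with h' | ⟨w, hw, hEw⟩
      · exact Or.inl (Finset.mem_union_right _ h')
      · exact Or.inr ⟨w, Finset.mem_union_right _ hw, hEw⟩
    · exact Or.inl (Finset.mem_union_left _ h)
    · exact Or.inr ⟨w, Finset.mem_union_left _ hw, hEw⟩
  · have h1 := Finset.card_union_le I D'
    have h2 := hb I hIind
    have h3 : a + (a - 1) * a = a ^ 2 := by
      obtain ⟨b, rfl⟩ : ∃ b, a = b + 1 := ⟨a - 1, by omega⟩
      simp only [Nat.add_sub_cancel]
      ring
    omega
end

section
/- For every ε > 0 there exists a tournament T with γ*(T) > 2 − ε. Concretely, for r = ⌈1/ε⌉ + 1, the rotational (Eulerian) tournament on vertices v₁,…,v_{2r−1} with arcs v_i → v_j whenever 1 ≤ (j − i) mod (2r−1) ≤ r − 1 satisfies γ*(T) > 2 − ε. -/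
open Finset
open scoped Classical

/-- For every `ε > 0`, the rotational tournament on `2r-1` vertices with
`r = ⌈1/ε⌉ + 1` (arc `x → v` iff `1 ≤ (v - x) mod (2r-1) ≤ r-1`) has fractional
domination number greater than `2 - ε`. -/
theorem rotational_tournament_fractional_domination_gt
    (ε : ℝ) (hε : 0 < ε) (r n : ℕ) (hr : r = ⌈1/ε⌉₊ + 1) (hn : n = 2 * r - 1) :
    ∀ g : Fin n → ℝ,
      (∀ v, 0 ≤ g v ∧ g v ≤ 1) →
      (∀ v : Fin n,
        1 ≤ g v + ∑ x ∈ univ.filter (fun x : Fin n =>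
          1 ≤ (v.val + n - x.val) % n ∧ (v.val + n - x.val) % n ≤ r - 1), g x) →
      2 - ε < ∑ v, g v := by
  intro g hg hdom
  have hr1 : 1 ≤ ⌈1/ε⌉₊ := Nat.one_le_ceil_iff.mpr (by positivity)
  have hr2 : 2 ≤ r := by omega
  have hn3 : 3 ≤ n := by omega
  haveI : NeZero n := ⟨by omega⟩
  -- rewrite the modular expression as `(v - x).val` in `Fin n`
  have key : ∀ v x : Fin n, (v.val + n - x.val) % n = (v - x).val := by
    intro v x
    rw [Fin.sub_def]
    simp only []
    congr 1
    omega
  -- each vertex `x` lies in exactly `r - 1` open in-neighborhoods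
  have hcard : ∀ x : Fin n,
      (univ.filter (fun v : Fin n =>
        1 ≤ (v.val + n - x.val) % n ∧ (v.val + n - x.val) % n ≤ r - 1)).card = r - 1 := by
    intro x
    have h1 : (univ.filter (fun v : Fin n =>
        1 ≤ (v.val + n - x.val) % n ∧ (v.val + n - x.val) % n ≤ r - 1)).card
        = (univ.filter (fun k : Fin n => 1 ≤ k.val ∧ k.val ≤ r - 1)).card := by
      apply Finset.card_nbij (fun v => v - x)
      · intro v hv
        simp only [mem_coe, mem_filter, mem_univ, true_and] at hv ⊢
        rwa [key] at hv
      · intro a _ b _ hab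
        exact sub_left_injective hab
      · intro k hk
        simp only [Set.mem_image, mem_coe, mem_filter, mem_univ, true_and] at hk ⊢
        exact ⟨k + x, by rw [key]; simpa using hk, by simp⟩
    rw [h1]
    have h2 : (univ.filter (fun k : Fin n => 1 ≤ k.val ∧ k.val ≤ r - 1))
        = Finset.Icc (⟨1, by omega⟩ : Fin n) ⟨r - 1, by omega⟩ := by
      ext k
      simp [Finset.mem_Icc, Fin.le_def]
    rw [h2, Fin.card_Icc]
    simp
  -- summing the constraints
  have hsum : ∑ v : Fin n, (g v + ∑ x ∈ univ.filter (fun x : Fin n =>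
      1 ≤ (v.val + n - x.val) % n ∧ (v.val + n - x.val) % n ≤ r - 1), g x)
      = (r : ℝ) * ∑ v, g v := by
    rw [Finset.sum_add_distrib]
    have : ∑ v : Fin n, ∑ x ∈ univ.filter (fun x : Fin n =>
        1 ≤ (v.val + n - x.val) % n ∧ (v.val + n - x.val) % n ≤ r - 1), g x
        = ((r : ℝ) - 1) * ∑ v, g v := by
      simp only [Finset.sum_filter]
      rw [Finset.sum_comm]
      have : ∀ x : Fin n, (∑ v : Fin n, if 1 ≤ (v.val + n - x.val) % n ∧
          (v.val + n - x.val) % n ≤ r - 1 then g x else 0) = ((r : ℝ) - 1) * g x := by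
        intro x
        rw [← Finset.sum_filter, Finset.sum_const, hcard x, nsmul_eq_mul]
        congr 1
        have : (1 : ℕ) ≤ r := by omega
        push_cast [Nat.cast_sub this]
        ring
      rw [Finset.sum_congr rfl fun x _ => this x, ← Finset.mul_sum]
    rw [this]; ring
  have hlb : (n : ℝ) ≤ (r : ℝ) * ∑ v, g v := by
    rw [← hsum]
    calc (n : ℝ) = ∑ _v : Fin n, (1 : ℝ) := by simp
    _ ≤ _ := Finset.sum_le_sum fun v _ => hdom v
  have hrpos : (0 : ℝ) < r := by positivity
  have hrε : 1 < (r : ℝ) * ε := by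
    have h1 : 1 / ε ≤ (⌈1/ε⌉₊ : ℝ) := Nat.le_ceil _
    have : 1 / ε < (r : ℝ) := by
      rw [hr]; push_cast; linarith
    calc 1 = (1/ε) * ε := by field_simp
    _ < (r : ℝ) * ε := by exact mul_lt_mul_of_pos_right this hε
  have hncast : (n : ℝ) = 2 * r - 1 := by
    rw [hn]; push_cast [Nat.cast_sub (by omega : 1 ≤ 2 * r)]; ring
  rw [hncast] at hlb
  rw [show (2 : ℝ) - ε = ((2 - ε) * r) / r by field_simp] ;
  rw [div_lt_iff₀ hrpos]
  nlinarith [hlb]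
end

section
/- For every ε > 0 and every positive integer k, there exists a digraph G with independence number α(G) = k and fractional domination number γ*(G) > 2k − ε. -/
open Finset
open scoped Classical

/-- For every `ε > 0` and every `k ≥ 1` there is a finite simple loopless digraph with
independence number exactly `k` whose fractional domination number exceeds `2k - ε`. -/
theorem exists_digraph_indepNum_eq_and_fractional_domination_gt
    (ε : ℝ) (hε : 0 < ε) (k : ℕ) (hk : 1 ≤ k) :
    ∃ (V : Type) (instF : Fintype V) (E : V → V → Prop),
      Irreflexive E ∧
      (∀ u v, E u v → ¬ E v u) ∧
      IsGreatest {n : ℕ | ∃ S : Finset V,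
        (∀ u ∈ S, ∀ w ∈ S, u ≠ w → ¬ E u w) ∧ S.card = n} k ∧
      (∀ g : V → ℝ,
        (∀ v, 0 ≤ g v ∧ g v ≤ 1) →
        (∀ v, 1 ≤ g v + ∑ x ∈ (@Finset.univ V instF).filter (fun x => E x v), g x) →
        2 * (k : ℝ) - ε < ∑ v ∈ @Finset.univ V instF, g v) := by
  classical
  set r : ℕ := Nat.ceil ((k : ℝ) / ε) + 1 with hrdef
  have hr2 : 2 ≤ r := by
    have : 1 ≤ Nat.ceil ((k : ℝ) / ε) := Nat.one_le_ceil_iff.mpr (by positivity)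
    omega
  set n : ℕ := 2 * r - 1 with hndef
  have hn3 : 3 ≤ n := by omega
  haveI : NeZero n := ⟨by omega⟩
  refine ⟨Fin k × ZMod n, inferInstance,
    fun u v => u.1 = v.1 ∧ (v.2 - u.2).val ∈ Finset.Icc 1 (r - 1), ?_, ?_, ?_, ?_⟩
  · -- Irreflexive
    intro u ⟨_, h⟩
    simp [ZMod.val_zero] at h
  · -- antisymmetric
    rintro u v ⟨h1, h2⟩ ⟨h3, h4⟩
    simp only [Finset.mem_Icc] at h2 h4
    have hne : u.2 ≠ v.2 := by
      intro h
      rw [h, sub_self, ZMod.val_zero] at h2; omega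
    have hsub : u.2 - v.2 = -(v.2 - u.2) := by ring
    rw [hsub, ZMod.neg_val] at h4
    have : v.2 - u.2 ≠ 0 := sub_ne_zero.mpr (Ne.symm hne)
    simp only [this, if_false] at h4
    have := ZMod.val_lt (v.2 - u.2)
    omega
  · -- independence number is exactly k
    constructor
    · -- k is achieved
      refine ⟨Finset.univ.image (fun i : Fin k => (i, (0 : ZMod n))), ?_, ?_⟩
      · intro u hu w hw huw
        simp only [Finset.mem_image, Finset.mem_univ, true_and] at hu hw
        obtain ⟨i, rfl⟩ := hu
        obtain ⟨j, rfl⟩ := hw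
        rintro ⟨h1, -⟩
        exact huw (by simp_all)
      · rw [Finset.card_image_of_injective _ (by intro a b h; simpa using h)]
        simp
    · -- k is an upper bound
      rintro m ⟨S, hSind, rfl⟩
      have : S.card ≤ (Finset.univ : Finset (Fin k)).card := by
        apply Finset.card_le_card_of_injOn (fun v => v.1) (fun _ _ => Finset.mem_univ _)
        intro u hu w hw h1
        by_contra hne
        have hne2 : u.2 ≠ w.2 := fun h => hne (Prod.ext h1 h)
        have hv1 : 1 ≤ (w.2 - u.2).val := by
          have h0 : w.2 - u.2 ≠ 0 := sub_ne_zero.mpr (Ne.symm hne2)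
          have := (ZMod.val_eq_zero (w.2 - u.2)).not.mpr h0
          omega
        have hvlt : (w.2 - u.2).val < n := ZMod.val_lt _
        rcases le_or_gt (w.2 - u.2).val (r - 1) with hle | hgt
        · exact hSind u hu w hw hne ⟨h1, Finset.mem_Icc.mpr ⟨hv1, hle⟩⟩
        · have hsub : u.2 - w.2 = -(w.2 - u.2) := by ring
          have hne0 : w.2 - u.2 ≠ 0 := sub_ne_zero.mpr (Ne.symm hne2)
          have hval : (u.2 - w.2).val = n - (w.2 - u.2).val := by
            rw [hsub, ZMod.neg_val]; simp [hne0]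
          refine hSind w hw u hu (Ne.symm hne) ⟨h1.symm, Finset.mem_Icc.mpr ⟨?_, ?_⟩⟩ <;>
            omega
      simpa using this
  · -- fractional domination bound
    intro g hg01 hgdom
    have hdeg : ∀ x : Fin k × ZMod n,
        (Finset.univ.filter (fun v : Fin k × ZMod n =>
          x.1 = v.1 ∧ (v.2 - x.2).val ∈ Finset.Icc 1 (r - 1))).card = r - 1 := by
      intro x
      have hicc : (Finset.Icc 1 (r - 1)).card = r - 1 := by rw [Nat.card_Icc]; omega
      have hb : (Finset.univ.filter (fun v : Fin k × ZMod n =>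
          x.1 = v.1 ∧ (v.2 - x.2).val ∈ Finset.Icc 1 (r - 1))).card
          = (Finset.Icc 1 (r - 1)).card := by
        apply Finset.card_bij' (fun v _ => (v.2 - x.2).val)
          (fun d _ => (x.1, x.2 + (d : ZMod n)))
        · intro v hv
          simp only [Finset.mem_filter] at hv
          exact hv.2.2
        · intro d hd
          simp only [Finset.mem_Icc] at hd
          rw [Finset.mem_filter]
          refine ⟨Finset.mem_univ _, rfl, ?_⟩
          have h2 : (x.2 + (d : ZMod n)) - x.2 = (d : ZMod n) := by ring
          rw [h2, ZMod.val_cast_of_lt (by omega), Finset.mem_Icc]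
          omega
        · intro v hv
          simp only [Finset.mem_filter] at hv
          obtain ⟨-, h1, -⟩ := hv
          refine Prod.ext h1 ?_
          simp only
          rw [ZMod.natCast_rightInverse (v.2 - x.2)]
          ring
        · intro d hd
          simp only [Finset.mem_Icc] at hd
          have h2 : (x.2 + (d : ZMod n)) - x.2 = (d : ZMod n) := by ring
          rw [h2, ZMod.val_cast_of_lt (by omega)]
      rw [hb, hicc]
    set Sg : ℝ := ∑ v : Fin k × ZMod n, g v with hSg
    have hsum : (k : ℝ) * n ≤ (r : ℝ) * Sg := by
      have h1 : (k : ℝ) * n ≤ ∑ v : Fin k × ZMod n, (g v +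
          ∑ x ∈ Finset.univ.filter (fun x : Fin k × ZMod n =>
            x.1 = v.1 ∧ (v.2 - x.2).val ∈ Finset.Icc 1 (r - 1)), g x) := by
        have h0 : (k : ℝ) * n = ∑ _v : Fin k × ZMod n, (1 : ℝ) := by
          simp [Finset.card_univ, mul_comm]
        rw [h0]
        refine Finset.sum_le_sum fun v _ => ?_
        have := hgdom v
        simp only [Finset.filter_congr_decidable] at this ⊢
        convert this using 3
      have h2 : ∑ v : Fin k × ZMod n, (g v +
          ∑ x ∈ Finset.univ.filter (fun x : Fin k × ZMod n =>
            x.1 = v.1 ∧ (v.2 - x.2).val ∈ Finset.Icc 1 (r - 1)), g x)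
          = Sg + ∑ x : Fin k × ZMod n, ((r : ℝ) - 1) * g x := by
        rw [Finset.sum_add_distrib]
        congr 1
        have hswap : ∑ v : Fin k × ZMod n, ∑ x ∈ Finset.univ.filter
            (fun x : Fin k × ZMod n =>
              x.1 = v.1 ∧ (v.2 - x.2).val ∈ Finset.Icc 1 (r - 1)), g x
            = ∑ x : Fin k × ZMod n, ∑ v ∈ Finset.univ.filter
            (fun v : Fin k × ZMod n =>
              x.1 = v.1 ∧ (v.2 - x.2).val ∈ Finset.Icc 1 (r - 1)), g x := by
          simp_rw [Finset.sum_filter]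
          exact Finset.sum_comm
        rw [hswap]
        apply Finset.sum_congr rfl
        intro x _
        rw [Finset.sum_const, hdeg x, nsmul_eq_mul]
        congr 1
        have h1r : 1 ≤ r := by omega
        push_cast [h1r]
        ring
      have h3 : Sg + ∑ x : Fin k × ZMod n, ((r : ℝ) - 1) * g x = (r : ℝ) * Sg := by
        rw [← Finset.mul_sum]
        ring
      linarith [h1, h2 ▸ h1, h3]
    have hrpos : (0 : ℝ) < r := by positivity
    have hnval : (n : ℝ) = 2 * (r : ℝ) - 1 := by
      have h1 : 1 ≤ 2 * r := by omega
      rw [hndef]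
      push_cast [h1]
      ring
    rw [hnval] at hsum
    have hkr : (k : ℝ) < ε * r := by
      have hceil : (k : ℝ) / ε ≤ (Nat.ceil ((k : ℝ) / ε) : ℝ) := Nat.le_ceil _
      have hrr : (k : ℝ) / ε < r := by rw [hrdef]; push_cast; linarith
      calc (k : ℝ) = (k / ε) * ε := by field_simp
        _ < r * ε := mul_lt_mul_of_pos_right hrr hε
        _ = ε * r := by ring
    show 2 * (k : ℝ) - ε < Sg
    nlinarith [hsum, hkr, hrpos]
end

section
/- For any finite digraph G, γ(G) ≤ α(G)·χ⃗(G), where γ(G) is the domination number, α(G) is the independence number of the underlying undirected graph, and χ⃗(G) is the dichromatic number. -/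
open Finset
open scoped Classical

/-- Kernel of a well-founded relation: `v` is in the kernel iff no in-neighbor is. -/
noncomputable def kernelP {V : Type*} {E : V → V → Prop} (wf : WellFounded E) : V → Prop :=
  wf.fix (fun v ih => ∀ u, ∀ h : E u v, ¬ ih u h)

theorem kernelP_iff {V : Type*} {E : V → V → Prop} (wf : WellFounded E) (v : V) :
    kernelP wf v ↔ ∀ u, E u v → ¬ kernelP wf u := by
  unfold kernelP
  rw [wf.fix_eq]

/-- For any finite digraph, `γ(G) ≤ α(G)·χ⃗(G)`: if `a` is the independence number and
`k` the dichromatic number (least number of parts inducing acyclic subdigraphs), then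
there is a dominating set of size at most `a·k`. -/
theorem domination_le_indepNum_mul_dichromatic
    {V : Type*} [Fintype V] (E : V → V → Prop)
    (hirr : Irreflexive E) (hsimple : ∀ u v, E u v → ¬ E v u)
    (a : ℕ)
    (ha : IsGreatest {n : ℕ | ∃ S : Finset V,
        (∀ u ∈ S, ∀ w ∈ S, u ≠ w → ¬ E u w) ∧ S.card = n} a)
    (k : ℕ)
    (hk : IsLeast {m : ℕ | ∃ c : V → Fin m, ∀ i : Fin m,
        Irreflexive (Relation.TransGen (fun u w => E u w ∧ c u = i ∧ c w = i))} k) :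
    ∃ D : Finset V,
      (∀ v : V, v ∈ D ∨ ∃ u ∈ D, E u v) ∧
      D.card ≤ a * k := by
  obtain ⟨⟨c, hc⟩, -⟩ := hk
  -- for each color, the restricted relation is well-founded
  have wf : ∀ i : Fin k, WellFounded (fun u w => E u w ∧ c u = i ∧ c w = i) := by
    intro i
    have htrans : WellFounded
        (Relation.TransGen (fun u w => E u w ∧ c u = i ∧ c w = i)) := by
      haveI : IsIrrefl V (Relation.TransGen (fun u w => E u w ∧ c u = i ∧ c w = i)) :=
        ⟨hc i⟩
      exact Finite.wellFounded_of_trans_of_irrefl _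
    refine Subrelation.wf ?_ htrans
    intro u w h
    exact Relation.TransGen.single h
  -- kernel of each color class
  set K : ∀ i : Fin k, V → Prop := fun i => kernelP (wf i) with hK
  set Di : Fin k → Finset V := fun i =>
    Finset.univ.filter (fun v => c v = i ∧ K i v) with hDi
  -- each Di is independent, hence has card ≤ a
  have hcard : ∀ i : Fin k, (Di i).card ≤ a := by
    intro i
    apply ha.2
    refine ⟨Di i, ?_, rfl⟩
    intro u hu w hw huw hE
    simp only [hDi, Finset.mem_filter] at hu hw
    have := (kernelP_iff (wf i) w).mp hw.2.2 u ⟨hE, hu.2.1, hw.2.1⟩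
    exact this hu.2.2
  refine ⟨Finset.univ.biUnion Di, ?_, ?_⟩
  · intro v
    by_cases hv : K (c v) v
    · left
      exact Finset.mem_biUnion.mpr ⟨c v, Finset.mem_univ _,
        Finset.mem_filter.mpr ⟨Finset.mem_univ _, rfl, hv⟩⟩
    · right
      have hv2 : ¬ kernelP (wf (c v)) v := hv
      rw [kernelP_iff] at hv2
      push_neg at hv2
      obtain ⟨u, ⟨hE, hcu, _⟩, hKu⟩ := hv2
      exact ⟨u, Finset.mem_biUnion.mpr ⟨c v, Finset.mem_univ _,
        Finset.mem_filter.mpr ⟨Finset.mem_univ _, hcu, hKu⟩⟩, hE⟩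
  · calc (Finset.univ.biUnion Di).card ≤ ∑ i : Fin k, (Di i).card :=
          Finset.card_biUnion_le
    _ ≤ ∑ _i : Fin k, a := Finset.sum_le_sum (fun i _ => hcard i)
    _ = a * k := by simp [mul_comm]
end

section
/- Every finite acyclic digraph has a kernel, i.e., an independent set S such that every vertex outside S is an out-neighbor of some vertex in S (so S is an independent dominating set under out-domination). -/
open Finset
open scoped Classical

/-- Every finite acyclic digraph has a kernel: an independent set `S` such that every
vertex outside `S` is an out-neighbor of some vertex of `S`. -/
theorem acyclic_digraph_has_kernel
    {V : Type*} [Fintype V] (E : V → V → Prop)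
    (hacyc : Irreflexive (Relation.TransGen E)) :
    ∃ S : Finset V,
      (∀ u ∈ S, ∀ w ∈ S, u ≠ w → ¬ E u w) ∧
      (∀ v : V, v ∉ S → ∃ u ∈ S, E u v) := by
  have hwf : WellFounded E := by
    have : IsIrrefl V (Relation.TransGen E) := ⟨hacyc⟩
    have : WellFounded (Relation.TransGen E) :=
      Finite.wellFounded_of_trans_of_irrefl _
    exact Subrelation.wf (fun h => Relation.TransGen.single h) this
  let K : V → Prop := hwf.fix (fun v ih => ∀ u (h : E u v), ¬ ih u h)
  have hK : ∀ v, K v ↔ ∀ u, E u v → ¬ K u := by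
    intro v
    have := hwf.fix_eq (fun v ih => ∀ u (h : E u v), ¬ ih u h) v
    rw [show K v = _ from this]
  refine ⟨Finset.univ.filter K, ?_, ?_⟩
  · intro u hu w hw _ hE
    simp only [Finset.mem_filter] at hu hw
    exact (hK w).1 hw.2 u hE hu.2
  · intro v hv
    simp only [Finset.mem_filter, Finset.mem_univ, true_and] at hv
    rw [hK v] at hv
    push_neg at hv
    obtain ⟨u, hE, hKu⟩ := hv
    exact ⟨u, by simp [hKu], hE⟩
end

section
/- In a finite acyclic digraph, every induced subdigraph on a set of vertices that form a color class of a legal dichromatic coloring is acyclic; consequently, if χ⃗(G) = k, then V(G) can be partitioned into k sets D₁,…,D_k, each containing an independent set S_i dominating D_i (within G[D_i]), and S = S₁ ∪ … ∪ S_k is a dominating set of G of size at most α(G)·k. -/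
open Finset
open scoped Classical

/-- If `χ⃗(G) = k` then `V(G)` partitions into `k` color classes `D₁,…,D_k`, each
containing an independent set `Sᵢ` dominating `Dᵢ` within `G[Dᵢ]`, and the union of the
`Sᵢ` is a dominating set of `G` of size at most `α(G)·k`. -/
theorem partition_kernels_give_dominating_set
    {V : Type*} [Fintype V] (E : V → V → Prop)
    (hirr : Irreflexive E) (hsimple : ∀ u v, E u v → ¬ E v u)
    (a : ℕ)
    (ha : IsGreatest {n : ℕ | ∃ S : Finset V,
        (∀ u ∈ S, ∀ w ∈ S, u ≠ w → ¬ E u w) ∧ S.card = n} a)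
    (k : ℕ)
    (hk : IsLeast {m : ℕ | ∃ c : V → Fin m, ∀ i : Fin m,
        Irreflexive (Relation.TransGen (fun u w => E u w ∧ c u = i ∧ c w = i))} k) :
    ∃ (D S : Fin k → Finset V),
      (∀ v : V, ∃! i : Fin k, v ∈ D i) ∧
      (∀ i, S i ⊆ D i) ∧
      (∀ i, ∀ u ∈ S i, ∀ w ∈ S i, u ≠ w → ¬ E u w) ∧
      (∀ i, ∀ v ∈ D i, v ∉ S i → ∃ u ∈ S i, E u v) ∧
      (∀ v : V, ∃ i : Fin k, v ∈ S i ∨ ∃ u ∈ S i, E u v) ∧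
      (Finset.univ.biUnion S).card ≤ a * k := by
  classical
  obtain ⟨⟨c, hc⟩, hkmin⟩ := hk
  have key : ∀ i : Fin k, ∃ S : Finset V, (∀ v ∈ S, c v = i) ∧
      (∀ u ∈ S, ∀ w ∈ S, u ≠ w → ¬ E u w) ∧
      (∀ v, c v = i → v ∉ S → ∃ u ∈ S, E u v) := by
    intro i
    set r : V → V → Prop := fun u v => E u v ∧ c u = i ∧ c v = i with hr
    haveI : IsTrans V (Relation.TransGen r) := inferInstance
    haveI : IsIrrefl V (Relation.TransGen r) := ⟨hc i⟩
    have hwf : WellFounded r := by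
      have h1 : WellFounded (Relation.TransGen r) :=
        Finite.wellFounded_of_trans_of_irrefl _
      exact Subrelation.wf (fun h => Relation.TransGen.single h) h1
    let kern : V → Prop :=
      WellFounded.fix (C := fun _ => Prop) hwf
        (fun v ih => ∀ u, ∀ h : r u v, ¬ ih u h)
    have kern_iff : ∀ v, kern v ↔ ∀ u, r u v → ¬ kern u := by
      intro v
      have := WellFounded.fix_eq (C := fun _ => Prop) hwf
        (fun v ih => ∀ u, ∀ h : r u v, ¬ ih u h) v
      rw [show kern v = _ from this]
    refine ⟨univ.filter (fun v => c v = i ∧ kern v), ?_, ?_, ?_⟩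
    · intro v hv; exact ((mem_filter.mp hv).2).1
    · intro u hu w hw hne hE
      obtain ⟨-, hcu, hku⟩ := mem_filter.mp hu
      obtain ⟨-, hcw, hkw⟩ := mem_filter.mp hw
      exact ((kern_iff w).mp hkw u ⟨hE, hcu, hcw⟩) hku
    · intro v hcv hv
      have hnk : ¬ kern v := fun hkv => hv (mem_filter.mpr ⟨mem_univ _, hcv, hkv⟩)
      rw [kern_iff] at hnk
      push_neg at hnk
      obtain ⟨u, hru, hku⟩ := hnk
      exact ⟨u, mem_filter.mpr ⟨mem_univ _, hru.2.1, hku⟩, hru.1⟩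
  choose S hS1 hS2 hS3 using key
  refine ⟨fun i => univ.filter (fun v => c v = i), S, ?_, ?_, hS2, ?_, ?_, ?_⟩
  · intro v
    refine ⟨c v, mem_filter.mpr ⟨mem_univ _, rfl⟩, fun j hj => ?_⟩
    exact ((mem_filter.mp hj).2).symm
  · intro i v hv
    exact mem_filter.mpr ⟨mem_univ _, hS1 i v hv⟩
  · intro i v hv hvS
    exact hS3 i v (mem_filter.mp hv).2 hvS
  · intro v
    refine ⟨c v, ?_⟩
    by_cases hv : v ∈ S (c v)
    · exact Or.inl hv
    · exact Or.inr (hS3 (c v) v rfl hv)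
  · calc (Finset.univ.biUnion S).card ≤ ∑ i, (S i).card := card_biUnion_le
      _ ≤ ∑ _i : Fin k, a := by
          refine Finset.sum_le_sum fun i _ => ?_
          exact ha.2 ⟨S i, hS2 i, rfl⟩
      _ = a * k := by simp [mul_comm]
end

section
/- Let G = (V,E) be a finite digraph and p : V → [0,1] with p(V) > 0. Suppose v ∈ V satisfies p(N⁻(v)) ≤ p(N⁺(v)), and S′ is a stable set in G[N°(v)] with p(N⁺_{G[N°(v)]}[S′]) ≥ p(N°(v))/2. Then S = S′ ∪ {v} is a stable set in G with p(N⁺[S]) ≥ p(V)/2. -/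
open Finset
open scoped Classical

/-- Induction step for the half-domination lemma: if `p(N⁻(v)) ≤ p(N⁺(v))` and `S'` is a
stable set in `G[N°(v)]` with `p(N⁺_{G[N°(v)]}[S']) ≥ p(N°(v))/2`, then `S = S' ∪ {v}` is
stable in `G` and `p(N⁺[S]) ≥ p(V)/2`. -/
theorem insert_vertex_stable_and_closed_outweight_ge_half
    {V : Type*} [Fintype V] (E : V → V → Prop)
    (hirr : Irreflexive E) (hsimple : ∀ u v, E u v → ¬ E v u)
    (p : V → ℝ) (hp : ∀ v, 0 ≤ p v ∧ p v ≤ 1)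
    (hpos : 0 < ∑ v, p v)
    (v : V)
    (hbal : ∑ x ∈ univ.filter (fun x => E x v), p x ≤
            ∑ x ∈ univ.filter (fun x => E v x), p x)
    (S' : Finset V)
    (hsub : ∀ u ∈ S', u ≠ v ∧ ¬ E v u ∧ ¬ E u v)
    (hstable : ∀ u ∈ S', ∀ w ∈ S', u ≠ w → ¬ E u w)
    (hhalf : (∑ x ∈ univ.filter (fun x => x ≠ v ∧ ¬ E v x ∧ ¬ E x v), p x) / 2 ≤
        ∑ x ∈ (univ.filter (fun x => x ≠ v ∧ ¬ E v x ∧ ¬ E x v)).filter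
          (fun x => x ∈ S' ∨ ∃ u ∈ S', E u x), p x) :
    (∀ u ∈ insert v S', ∀ w ∈ insert v S', u ≠ w → ¬ E u w) ∧
    (∑ x, p x) / 2 ≤
      ∑ x ∈ (insert v S') ∪ univ.filter (fun x => ∃ u ∈ insert v S', E u x), p x := by

  classical
  constructor
  · intro u hu w hw huw
    rcases mem_insert.mp hu with hu | hu
    · rcases mem_insert.mp hw with hw | hw
      · exact absurd (hu.trans hw.symm) huw
      · rw [hu]; exact (hsub w hw).2.1
    · rcases mem_insert.mp hw with hw | hw
      · rw [hw]; exact (hsub u hu).2.2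
      · exact hstable u hu w hw huw
  · set Nout := univ.filter (fun x => E v x) with hNout
    set Nin := univ.filter (fun x => E x v) with hNin
    set N0 := univ.filter (fun x => x ≠ v ∧ ¬ E v x ∧ ¬ E x v) with hN0
    set D := N0.filter (fun x => x ∈ S' ∨ ∃ u ∈ S', E u x) with hD
    set T := (insert v S') ∪ univ.filter (fun x => ∃ u ∈ insert v S', E u x) with hT
    have hpart : (univ : Finset V) = insert v (Nout ∪ Nin ∪ N0) := by
      ext x
      simp only [mem_univ, mem_insert, mem_union, hNout, hNin, hN0, mem_filter, true_iff,
        true_and]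
      by_cases hxv : x = v
      · exact Or.inl hxv
      · by_cases h1 : E v x
        · exact Or.inr (Or.inl (Or.inl h1))
        · by_cases h2 : E x v
          · exact Or.inr (Or.inl (Or.inr h2))
          · exact Or.inr (Or.inr ⟨hxv, h1, h2⟩)
    have hvnot : v ∉ Nout ∪ Nin ∪ N0 := by
      simp only [hNout, hNin, hN0, mem_union, mem_filter, mem_univ, true_and]
      rintro ((h | h) | ⟨h, _⟩) <;> first | exact hirr v h | exact h rfl
    have hd1 : Disjoint Nout Nin := by
      rw [disjoint_left]
      intro x hx hx'
      simp only [hNout, hNin, mem_filter, mem_univ, true_and] at hx hx'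
      exact hsimple v x hx hx'
    have hd2 : Disjoint (Nout ∪ Nin) N0 := by
      rw [disjoint_left]
      intro x hx hx'
      simp only [hNout, hNin, hN0, mem_union, mem_filter, mem_univ, true_and] at hx hx'
      rcases hx with h | h
      · exact hx'.2.1 h
      · exact hx'.2.2 h
    have hsumall : ∑ x, p x = p v + (∑ x ∈ Nout, p x + ∑ x ∈ Nin, p x + ∑ x ∈ N0, p x) := by
      rw [hpart, sum_insert hvnot, sum_union hd2, sum_union hd1]
    -- the subset {v} ∪ Nout ∪ D ⊆ T
    have hDsub : D ⊆ T := by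
      intro x hx
      simp only [hD, hN0, mem_filter, mem_univ, true_and] at hx
      simp only [hT, mem_union, mem_insert, mem_filter, mem_univ, true_and]
      rcases hx.2 with h | ⟨u, hu, hux⟩
      · tauto
      · exact Or.inr ⟨u, Or.inr hu, hux⟩
    have hOutsub : Nout ⊆ T := by
      intro x hx
      simp only [hNout, mem_filter, mem_univ, true_and] at hx
      simp only [hT, mem_union, mem_insert, mem_filter, mem_univ, true_and]
      exact Or.inr ⟨v, Or.inl rfl, hx⟩
    have hvT : v ∈ T := by
      simp only [hT, mem_union, mem_insert]
      tauto
    have hvD : v ∉ Nout ∪ D := by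
      simp only [hNout, hD, hN0, mem_union, mem_filter, mem_univ, true_and]
      rintro (h | ⟨⟨h, _⟩, _⟩)
      · exact hirr v h
      · exact h rfl
    have hdOD : Disjoint Nout D := by
      rw [disjoint_left]
      intro x hx hx'
      simp only [hNout, mem_filter, mem_univ, true_and] at hx
      simp only [hD, hN0, mem_filter, mem_univ, true_and] at hx'
      exact hx'.1.2.1 hx
    have hsubT : insert v (Nout ∪ D) ⊆ T := by
      intro x hx
      rcases mem_insert.mp hx with rfl | hx
      · exact hvT
      · rcases mem_union.mp hx with h | h
        · exact hOutsub h
        · exact hDsub h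
    have hTge : p v + (∑ x ∈ Nout, p x + ∑ x ∈ D, p x) ≤ ∑ x ∈ T, p x := by
      rw [← sum_union hdOD, ← sum_insert hvD]
      exact sum_le_sum_of_subset_of_nonneg hsubT (fun i _ _ => (hp i).1)
    have hDge : (∑ x ∈ N0, p x) / 2 ≤ ∑ x ∈ D, p x := hhalf
    have hpv : 0 ≤ p v := (hp v).1
    linarith [hbal]
end
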